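/- Let G be a group, A = ⊕_{g∈G} A_g a G-graded unital *-algebra over ℂ whose unit fibre A_e is commutative, and χ a positive character of A_e. Then for every g ∈ G and all a, b ∈ A_g with χ(a* a) ≠ 0 and χ(b* b) ≠ 0, one has χ(a* a)·χ(b* b) = χ(a* b)·χ(b* a) = |χ(a* b)|², and in particular χ(a* b) ≠ 0. -/

import Mathlib

/-- A `G`-graded unital `⋆`-algebra over `ℂ`: a direct sum decomposition
`A = ⊕_{g ∈ G} A_g` into subspaces with `A_g · A_h ⊆ A_{gh}`, `(A_g)* = A_{g⁻¹}` and
`1 ∈ A_e`. -/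
structure GradedStarAlgebra (G : Type*) [Group G]
    (A : Type*) [Ring A] [Algebra ℂ A] [StarRing A] [StarModule ℂ A] where
  fiber : G → Submodule ℂ A
  mul_mem' : ∀ {g h : G} {a b : A}, a ∈ fiber g → b ∈ fiber h → a * b ∈ fiber (g * h)
  star_mem' : ∀ {g : G} {a : A}, a ∈ fiber g → star a ∈ fiber g⁻¹
  one_mem' : (1 : A) ∈ fiber 1
  decompose' : ∀ a : A, ∃ (F : Finset G) (c : G → A),
    (∀ g : G, c g ∈ fiber g) ∧ a = ∑ g ∈ F, c g
  independent' : ∀ (F : Finset G) (c : G → A), (∀ g : G, c g ∈ fiber g) →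
    ∑ g ∈ F, c g = 0 → ∀ g ∈ F, c g = 0

variable {G : Type*} [Group G]
variable {A : Type*} [Ring A] [Algebra ℂ A] [StarRing A] [StarModule ℂ A]

/-- A positive character of the unit fibre `A_e` of a `G`-graded unital `⋆`-algebra: a unital,
multiplicative, `ℂ`-linear, `⋆`-preserving functional on `A_e` such that `χ (a* a) ≥ 0` for
every `a ∈ A_g` and every `g ∈ G`. -/
structure PosChar (S : GradedStarAlgebra G A) where
  toFun : A → ℂ
  map_one' : toFun 1 = 1
  map_mul' : ∀ x ∈ S.fiber 1, ∀ y ∈ S.fiber 1, toFun (x * y) = toFun x * toFun y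
  map_add' : ∀ x ∈ S.fiber 1, ∀ y ∈ S.fiber 1, toFun (x + y) = toFun x + toFun y
  map_smul' : ∀ (c : ℂ), ∀ x ∈ S.fiber 1, toFun (c • x) = c * toFun x
  map_star' : ∀ x ∈ S.fiber 1, toFun (star x) = starRingEnd ℂ (toFun x)
  pos' : ∀ (g : G), ∀ a ∈ S.fiber g,
    0 ≤ (toFun (star a * a)).re ∧ (toFun (star a * a)).im = 0

/-!
Write `⟨u, v⟩ = χ(u* v)` for `u, v ∈ A_g`; this is a sesquilinear form with
`⟨v, u⟩ = conj ⟨u, v⟩`. Since `u u*` and `v v*` lie in the commutative fibre `A_e`,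
`u* (v v*) (u u*) v = u* (u u*) (v v*) v`, and applying the multiplicative `χ` gives
`⟨u, v⟩ ⟨v, u⟩ ⟨u, v⟩ = ⟨u, u⟩ ⟨u, v⟩ ⟨v, v⟩`. Once `⟨a, b⟩ ≠ 0` it cancels, giving
`⟨a, a⟩ ⟨b, b⟩ = |⟨a, b⟩|²`. If `⟨a, b⟩ = 0`, the same identity for `u = a`, `v = a + b`
reads `⟨a, a⟩³ = ⟨a, a⟩² (⟨a, a⟩ + ⟨b, b⟩)`, forcing `⟨a, a⟩² ⟨b, b⟩ = 0`.
-/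

namespace GradedStarAlgebra

variable {S : GradedStarAlgebra G A} {g : G} {u v : A}

lemma mul_mem_fiber_one {x y : A} (hx : x ∈ S.fiber 1) (hy : y ∈ S.fiber 1) :
    x * y ∈ S.fiber 1 := by
  simpa using S.mul_mem' hx hy

lemma star_mul_mem_fiber_one (hu : u ∈ S.fiber g) (hv : v ∈ S.fiber g) :
    star u * v ∈ S.fiber 1 := by
  simpa using S.mul_mem' (S.star_mem' hu) hv

lemma mul_star_mem_fiber_one (hu : u ∈ S.fiber g) (hv : v ∈ S.fiber g) :
    u * star v ∈ S.fiber 1 := by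
  simpa using S.mul_mem' hu (S.star_mem' hv)

end GradedStarAlgebra

namespace PosChar

open GradedStarAlgebra

variable {S : GradedStarAlgebra G A} (χ : PosChar S) {g : G} {u v w : A}

lemma map_star_mul_swap (hu : u ∈ S.fiber g) (hv : v ∈ S.fiber g) :
    χ.toFun (star v * u) = starRingEnd ℂ (χ.toFun (star u * v)) := by
  simpa using χ.map_star' _ (star_mul_mem_fiber_one hu hv)

lemma map_star_mul_add (hu : u ∈ S.fiber g) (hv : v ∈ S.fiber g) (hw : w ∈ S.fiber g) :
    χ.toFun (star u * (v + w)) = χ.toFun (star u * v) + χ.toFun (star u * w) := by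
  rw [mul_add, χ.map_add' _ (star_mul_mem_fiber_one hu hv) _ (star_mul_mem_fiber_one hu hw)]

lemma map_star_add_mul (hu : u ∈ S.fiber g) (hv : v ∈ S.fiber g) (hw : w ∈ S.fiber g) :
    χ.toFun (star (u + v) * w) = χ.toFun (star u * w) + χ.toFun (star v * w) := by
  rw [star_add, add_mul,
    χ.map_add' _ (star_mul_mem_fiber_one hu hw) _ (star_mul_mem_fiber_one hv hw)]

theorem gram_cube (hcomm : ∀ x ∈ S.fiber 1, ∀ y ∈ S.fiber 1, x * y = y * x)
    (hu : u ∈ S.fiber g) (hv : v ∈ S.fiber g) :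
    χ.toFun (star u * v) * χ.toFun (star v * u) * χ.toFun (star u * v) =
      χ.toFun (star u * u) * χ.toFun (star u * v) * χ.toFun (star v * v) := by
  have hcomm_uv : v * star v * (u * star u) = u * star u * (v * star v) :=
    hcomm _ (mul_star_mem_fiber_one hv hv) _ (mul_star_mem_fiber_one hu hu)
  have h_elt : star u * v * (star v * u) * (star u * v) =
      star u * u * (star u * v) * (star v * v) := by
    simpa only [mul_assoc] using congrArg (fun x => star u * (x * v)) hcomm_uv
  have huv := star_mul_mem_fiber_one hu hv
  have hvu := star_mul_mem_fiber_one hv hu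
  have huu := star_mul_mem_fiber_one hu hu
  have hvv := star_mul_mem_fiber_one hv hv
  rw [← χ.map_mul' _ huv _ hvu, ← χ.map_mul' _ (mul_mem_fiber_one huv hvu) _ huv,
    ← χ.map_mul' _ huu _ huv, ← χ.map_mul' _ (mul_mem_fiber_one huu huv) _ hvv, h_elt]

theorem map_star_mul_ne_zero (hcomm : ∀ x ∈ S.fiber 1, ∀ y ∈ S.fiber 1, x * y = y * x)
    (hu : u ∈ S.fiber g) (hv : v ∈ S.fiber g)
    (hu0 : χ.toFun (star u * u) ≠ 0) (hv0 : χ.toFun (star v * v) ≠ 0) :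
    χ.toFun (star u * v) ≠ 0 := by
  intro huv0
  have hvu0 : χ.toFun (star v * u) = 0 := by rw [χ.map_star_mul_swap hu hv, huv0, map_zero]
  have key := χ.gram_cube hcomm hu (add_mem hu hv)
  rw [χ.map_star_add_mul hu hv (add_mem hu hv), χ.map_star_add_mul hu hv hu,
    χ.map_star_mul_add hu hu hv, χ.map_star_mul_add hv hu hv, huv0, hvu0] at key
  have h_cube : χ.toFun (star u * u) * χ.toFun (star u * u) * χ.toFun (star v * v) = 0 := by
    linear_combination -key
  exact hv0 ((mul_eq_zero.mp h_cube).resolve_left (mul_ne_zero hu0 hu0))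

end PosChar

theorem posChar_gram_identity (S : GradedStarAlgebra G A)
    (hcomm : ∀ x ∈ S.fiber 1, ∀ y ∈ S.fiber 1, x * y = y * x)
    (χ : PosChar S) (g : G) (a b : A) (ha : a ∈ S.fiber g) (hb : b ∈ S.fiber g)
    (ha0 : χ.toFun (star a * a) ≠ 0) (hb0 : χ.toFun (star b * b) ≠ 0) :
    χ.toFun (star a * a) * χ.toFun (star b * b) =
      χ.toFun (star a * b) * χ.toFun (star b * a) ∧
    χ.toFun (star a * b) * χ.toFun (star b * a) =
      ((‖χ.toFun (star a * b)‖ : ℝ) : ℂ) ^ 2 ∧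
    χ.toFun (star a * b) ≠ 0 := by
  have hab0 := χ.map_star_mul_ne_zero hcomm ha hb ha0 hb0
  have h_norm : χ.toFun (star a * b) * χ.toFun (star b * a) =
      ((‖χ.toFun (star a * b)‖ : ℝ) : ℂ) ^ 2 := by
    rw [χ.map_star_mul_swap ha hb, Complex.mul_conj']
  refine ⟨mul_right_cancel₀ hab0 ?_, h_norm, hab0⟩
  linear_combination -χ.gram_cube hcomm ha hb
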